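/- arXiv:1601.08251 — 4 statements merged into one kernel-verified Lean document; each statement's English description precedes it below -/
import Mathlib

section
/- Let E ⊂ ℝ^{n+1} be a set, x ∈ E, and suppose there exist constants c, ρ > 0 such that H^n(B(y,r) ∩ E) ≥ c·r^n for all y ∈ B(x,ρ) ∩ E and all 0 < r ≤ ρ. Suppose further that for some η with 0 < η < min{2^{-4n}, c²}, there is an n-dimensional affine subspace P through x and radius r_0 > 0 such that H^n((E ∩ B(x,r)) \ P^{(ηr)}) < η r^n for all 0 < r < r_0, where P^{(ηr)} denotes the closed ηr-neighborhood of P. Then the open truncated cone with vertex x, axis normal to P, height η^{1/(4n)}·min{r_0, ρ}, and aperture 2·arctan(η^{-1/(4n)}/2) is disjoint from E. -/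
/-!
Suppose `y ∈ E` lies in the cone at height `t = ⟪y - x, ν⟫` and put `a = η ^ (1 / (4 n))`.
The aperture makes `‖y - x‖ < t (1 / (2 a) + a)`, so for `a < 1/2` the ball `B(y, t/2)` lies in
`B(x, t/a)` and, being at height more than `t/2 ≥ η t / a`, outside the `(η t / a)`-neighbourhood
of `P`. Lower regularity gives `B(y, t/2) ∩ E` measure at least `c (t/2)^n`, flatness at most
`η (t/a)^n`, and `η < min (2^(-4n)) c²` gives `η 2^n < c η^(1/4) = c a^n`, a contradiction.
For `n = 0` the exponent `1 / (4 n)` is `0` in Lean, the cone lies on the line through `x`, and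
a small ball around `y` gives `c < η` in the same way.
-/

open Metric MeasureTheory Set Filter
open scoped RealInnerProductSpace Topology

noncomputable section

/-- The open truncated cone with vertex `z`, axis (and direction) `ν`,
height `h` and aperture `α`. -/
def truncCone {n : ℕ} (ν : EuclideanSpace ℝ (Fin (n + 1))) (h α : ℝ)
    (z : EuclideanSpace ℝ (Fin (n + 1))) : Set (EuclideanSpace ℝ (Fin (n + 1))) :=
  {y | 0 < ⟪y - z, ν⟫ ∧ ⟪y - z, ν⟫ < h ∧ ‖y - z‖ * Real.cos (α / 2) < ⟪y - z, ν⟫}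

section Geometry

variable {V : Type*} [NormedAddCommGroup V] [InnerProductSpace ℝ V]
  {P : AffineSubspace ℝ V} {x ν : V}

theorem inner_sub_le_dist_of_mem (hxP : x ∈ P) (hνP : ∀ v ∈ P.direction, ⟪v, ν⟫ = 0)
    (hν : ‖ν‖ ≤ 1) (z : V) {p : V} (hp : p ∈ P) : ⟪z - x, ν⟫ ≤ dist z p :=
  calc ⟪z - x, ν⟫ = ⟪z - p, ν⟫ := by
        rw [← sub_add_sub_cancel z p x, inner_add_left,
          hνP (p - x) (P.vsub_mem_direction hp hxP), add_zero]
    _ ≤ ‖z - p‖ * ‖ν‖ := real_inner_le_norm _ _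
    _ ≤ dist z p := by
        rw [dist_eq_norm]; exact mul_le_of_le_one_right (norm_nonneg _) hν

theorem disjoint_ball_cthickening_of_add_le_inner (hxP : x ∈ P)
    (hνP : ∀ v ∈ P.direction, ⟪v, ν⟫ = 0) (hν : ‖ν‖ ≤ 1) {y : V} {s δ : ℝ} (hδ : 0 ≤ δ)
    (hδs : δ + s ≤ ⟪y - x, ν⟫) : Disjoint (ball y s) (cthickening δ (P : Set V)) := by
  refine Set.disjoint_left.2 fun z hz hzP => ?_
  have hzy : -s < ⟪z - y, ν⟫ := by
    have := (abs_le.1 (abs_real_inner_le_norm (z - y) ν)).1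
    have := mul_le_of_le_one_right (norm_nonneg (z - y)) hν
    rw [mem_ball, dist_eq_norm] at hz
    linarith
  have hδz : δ < ⟪z - x, ν⟫ := by
    rw [← sub_add_sub_cancel z y x, inner_add_left]
    linarith
  have hle : ENNReal.ofReal ⟪z - x, ν⟫ ≤ ENNReal.ofReal δ :=
    (le_infEDist.2 fun p hp => by
      rw [edist_dist]
      exact ENNReal.ofReal_le_ofReal (inner_sub_le_dist_of_mem hxP hνP hν z hp)).trans
      (mem_cthickening_iff.1 hzP)
  rw [ENNReal.ofReal_le_ofReal_iff hδ] at hle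
  linarith

theorem lt_of_le_measure_ball_inter_of_measure_diff_cthickening_lt [MeasurableSpace V]
    (μ : Measure V) (E : Set V) (hxP : x ∈ P) (hνP : ∀ v ∈ P.direction, ⟪v, ν⟫ = 0)
    (hν : ‖ν‖ ≤ 1) {y : V} {s r δ A B : ℝ} (hδ : 0 ≤ δ)
    (hA : ENNReal.ofReal A ≤ μ (ball y s ∩ E))
    (hB : μ ((E ∩ ball x r) \ cthickening δ (P : Set V)) < ENNReal.ofReal B)
    (hsr : s + dist y x ≤ r) (hδs : δ + s ≤ ⟪y - x, ν⟫) : A < B := by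
  have hsub : ball y s ∩ E ⊆ (E ∩ ball x r) \ cthickening δ (P : Set V) :=
    fun z ⟨hzy, hzE⟩ => ⟨⟨hzE, ball_subset_ball' hsr hzy⟩,
      Set.disjoint_left.1 (disjoint_ball_cthickening_of_add_le_inner hxP hνP hν hδ hδs) hzy⟩
  exact ((ENNReal.ofReal_lt_ofReal_iff'.1 ((hA.trans (measure_mono hsub)).trans_lt hB))).1

theorem abs_real_inner_eq_norm_of_finrank_eq_one (hV : Module.finrank ℝ V = 1)
    (hν : ‖ν‖ = 1) (v : V) : |⟪v, ν⟫| = ‖v‖ := by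
  have hν0 : ν ≠ 0 := norm_ne_zero_iff.1 (by simp [hν])
  obtain ⟨a, rfl⟩ := (finrank_eq_one_iff_of_nonzero' ν hν0).1 hV v
  rw [real_inner_smul_left, real_inner_self_eq_norm_sq, norm_smul, hν, Real.norm_eq_abs]
  simp

end Geometry

theorem norm_sub_lt_of_mem_truncCone {n : ℕ} {ν x y : EuclideanSpace ℝ (Fin (n + 1))}
    {h k : ℝ} (hy : y ∈ truncCone ν h (2 * Real.arctan k) x) :
    ‖y - x‖ < ⟪y - x, ν⟫ * √(1 + k ^ 2) := by
  have hcone := hy.2.2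
  rw [mul_div_cancel_left₀ _ two_ne_zero, Real.cos_arctan, mul_one_div,
    div_lt_iff₀ (by positivity)] at hcone
  exact hcone

theorem rpow_one_div_four_mul_lt_half {n : ℕ} (hn : 0 < n) {η : ℝ} (hη0 : 0 < η)
    (hη : η < ((2 : ℝ) ^ (4 * n))⁻¹) : η ^ ((1 : ℝ) / (4 * n)) < 1 / 2 := by
  have h4n : (0 : ℝ) < 4 * n := by positivity
  calc η ^ ((1 : ℝ) / (4 * n)) < (((2 : ℝ) ^ (4 * n))⁻¹) ^ ((1 : ℝ) / (4 * n)) :=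
        Real.rpow_lt_rpow hη0.le hη (by positivity)
    _ = 1 / 2 := by
        rw [Real.inv_rpow (by positivity), ← Real.rpow_natCast, ← Real.rpow_mul zero_le_two]
        push_cast
        rw [mul_one_div_cancel h4n.ne', Real.rpow_one, one_div]

theorem mul_two_pow_lt_mul_rpow {n : ℕ} {η c : ℝ} (hη0 : 0 < η) (hc : 0 < c)
    (hη : η < min ((2 : ℝ) ^ (4 * n))⁻¹ (c ^ 2)) : η * 2 ^ n < c * η ^ ((1 : ℝ) / 4) := by
  have hsqrt : η ^ ((1 : ℝ) / 2) < c := by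
    rw [← Real.sqrt_eq_rpow, ← Real.sqrt_sq hc.le]
    exact Real.sqrt_lt_sqrt hη0.le (hη.trans_le (min_le_right _ _))
  have hsmall : η ^ ((1 : ℝ) / 4) * 2 ^ n < 1 := by
    have hprod : η * 2 ^ (4 * n) < 1 :=
      calc η * 2 ^ (4 * n) < ((2 : ℝ) ^ (4 * n))⁻¹ * 2 ^ (4 * n) := by
            gcongr; exact hη.trans_le (min_le_left _ _)
        _ = 1 := inv_mul_cancel₀ (by positivity)
    have h4 : ((2 : ℝ) ^ (4 * n)) ^ ((1 : ℝ) / 4) = 2 ^ n := by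
      rw [pow_mul', ← Real.rpow_natCast _ 4, ← Real.rpow_mul (by positivity)]
      norm_num
    rw [← h4, ← Real.mul_rpow hη0.le (by positivity)]
    exact Real.rpow_lt_one (by positivity) hprod (by norm_num)
  have hsplit : η = η ^ ((1 : ℝ) / 2) * η ^ ((1 : ℝ) / 4) * η ^ ((1 : ℝ) / 4) := by
    rw [← Real.rpow_add hη0, ← Real.rpow_add hη0]; norm_num
  calc η * 2 ^ n = η ^ ((1 : ℝ) / 2) * η ^ ((1 : ℝ) / 4) * (η ^ ((1 : ℝ) / 4) * 2 ^ n) := by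
        rw [← mul_assoc, ← hsplit]
    _ < c * η ^ ((1 : ℝ) / 4) * 1 := by gcongr
    _ = c * η ^ ((1 : ℝ) / 4) := mul_one _

theorem sqrt_one_add_inv_div_two_sq_le {a : ℝ} (ha : 0 < a) :
    √(1 + (a⁻¹ / 2) ^ 2) ≤ a⁻¹ / 2 + a := by
  rw [Real.sqrt_le_left (by positivity), add_sq, mul_assoc, div_mul_eq_mul_div,
    inv_mul_cancel₀ ha.ne']
  nlinarith [sq_nonneg a]

theorem exists_radii_of_norm_lt_mul_sqrt {n : ℕ} (hn : 0 < n) {η c t d M : ℝ} (hη0 : 0 < η)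
    (hc : 0 < c) (hη : η < min ((2 : ℝ) ^ (4 * n))⁻¹ (c ^ 2)) (ht : 0 < t)
    (htM : t < η ^ ((1 : ℝ) / (4 * n)) * M)
    (hd : d < t * √(1 + (η ^ (-(1 : ℝ) / (4 * n)) / 2) ^ 2)) :
    ∃ s r, 0 < s ∧ r < M ∧ s + d ≤ r ∧ η * r + s ≤ t ∧ η * r ^ n ≤ c * s ^ n := by
  set a := η ^ ((1 : ℝ) / (4 * n)) with ha
  have ha0 : 0 < a := Real.rpow_pos_of_pos hη0 _
  have ha2 : a < 1 / 2 := rpow_one_div_four_mul_lt_half hn hη0 (hη.trans_le (min_le_left _ _))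
  have hη1 : η ≤ 1 := (hη.trans_le (min_le_left _ _)).le.trans
    (inv_le_one_of_one_le₀ (one_le_pow₀ one_le_two))
  have hηa : η ≤ a * a := by
    have hn1 : (1 : ℝ) ≤ n := by exact_mod_cast hn
    rw [ha, ← Real.rpow_add hη0]
    calc η = η ^ (1 : ℝ) := (Real.rpow_one η).symm
      _ ≤ _ := Real.rpow_le_rpow_of_exponent_ge hη0 hη1 (by
          rw [← add_div, div_le_one (by positivity)]; linarith)
  have hd' : d < t * (a⁻¹ / 2 + a) := by
    rw [neg_div, Real.rpow_neg hη0.le, ← ha] at hd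
    exact hd.trans_le (mul_le_mul_of_nonneg_left (sqrt_one_add_inv_div_two_sq_le ha0) ht.le)
  have han : a ^ n = η ^ ((1 : ℝ) / 4) := by
    rw [ha, ← Real.rpow_natCast, ← Real.rpow_mul hη0.le]
    congr 1
    field_simp
  have hpow : η * 2 ^ n < c * a ^ n := han ▸ mul_two_pow_lt_mul_rpow hη0 hc hη
  refine ⟨t / 2, t / a, by positivity, (div_lt_iff₀ ha0).2 (by linarith [mul_comm a M]),
    ?_, ?_, ?_⟩
  · have hkey : 1 / 2 + a ≤ a⁻¹ / 2 := by
      have hprod := mul_inv_cancel₀ ha0.ne'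
      nlinarith [mul_pos (inv_pos.2 ha0) (show 0 < 1 / 2 - a / 2 - a ^ 2 by nlinarith)]
    rw [div_eq_mul_inv t a]
    nlinarith [mul_le_mul_of_nonneg_left hkey ht.le]
  · have hηa' : η / a ≤ a := (div_le_iff₀ ha0).2 hηa
    calc η * (t / a) + t / 2 = t * (η / a) + t / 2 := by ring
      _ ≤ t * a + t / 2 := by gcongr
      _ ≤ t := by nlinarith
  · calc η * (t / a) ^ n = t ^ n * (η / a ^ n) := by rw [div_pow]; ring
      _ ≤ t ^ n * (c / 2 ^ n) := mul_le_mul_of_nonneg_left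
          ((div_le_div_iff₀ (by positivity) (by positivity)).2 hpow.le) (by positivity)
      _ = c * (t / 2) ^ n := by rw [div_pow]; ring

theorem exists_radii_of_lt_one {η t M : ℝ} (hη1 : η < 1) (ht : 0 < t) (htM : t < M) :
    ∃ s r, 0 < s ∧ r < M ∧ s + t ≤ r ∧ η * r + s ≤ t := by
  set s := min ((M - t) / 2) ((1 - η) * t / 2)
  have hs : 0 < s := lt_min (by linarith) (by nlinarith)
  have hsM : s ≤ (M - t) / 2 := min_le_left _ _
  have hsη : s ≤ (1 - η) * t / 2 := min_le_right _ _
  exact ⟨s, t + s, hs, by linarith, by linarith, by nlinarith⟩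

theorem stmt0_general {n : ℕ} (E : Set (EuclideanSpace ℝ (Fin (n + 1))))
    (x : EuclideanSpace ℝ (Fin (n + 1)))
    (c ρ : ℝ) (hc : 0 < c)
    (hLADR : ∀ y ∈ ball x ρ ∩ E, ∀ r : ℝ, 0 < r → r ≤ ρ →
      ENNReal.ofReal (c * r ^ n) ≤ μH[(n : ℝ)] (ball y r ∩ E))
    (η : ℝ) (hη0 : 0 < η) (hη : η < min (((2 : ℝ) ^ (4 * n))⁻¹) (c ^ 2))
    (P : AffineSubspace ℝ (EuclideanSpace ℝ (Fin (n + 1))))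
    (hxP : x ∈ P)
    (r₀ : ℝ)
    (hflat : ∀ r : ℝ, 0 < r → r < r₀ →
      μH[(n : ℝ)] ((E ∩ ball x r) \ Metric.cthickening (η * r) (P : Set _))
        < ENNReal.ofReal (η * r ^ n))
    (ν : EuclideanSpace ℝ (Fin (n + 1))) (hν : ‖ν‖ = 1)
    (hνP : ∀ v ∈ P.direction, ⟪v, ν⟫ = 0) :
    Disjoint
      (truncCone ν (η ^ ((1 : ℝ) / (4 * n)) * min r₀ ρ)
        (2 * Real.arctan (η ^ (-(1 : ℝ) / (4 * n)) / 2)) x) E := by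
  refine Set.disjoint_left.2 fun y hy hyE => ?_
  obtain ⟨s, r, hs, hrM, hsr, hδs, hle⟩ : ∃ s r, 0 < s ∧ r < min r₀ ρ ∧ s + dist y x ≤ r ∧
      η * r + s ≤ ⟪y - x, ν⟫ ∧ η * r ^ n ≤ c * s ^ n := by
    rcases n.eq_zero_or_pos with rfl | hn
    · have hth : ⟪y - x, ν⟫ < min r₀ ρ := by simpa using hy.2.1
      obtain ⟨hη1, hηc⟩ : η < 1 ∧ η < c ^ 2 := by simpa using hη
      have hyx : dist y x = ⟪y - x, ν⟫ := by
        rw [dist_eq_norm, ← abs_real_inner_eq_norm_of_finrank_eq_one (by simp) hν,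
          abs_of_pos hy.1]
      obtain ⟨s, r, hs, hrM, hsr, hδs⟩ := exists_radii_of_lt_one hη1 hy.1 hth
      refine ⟨s, r, hs, hrM, hyx ▸ hsr, hδs, ?_⟩
      simp only [pow_zero, mul_one]
      nlinarith
    · exact exists_radii_of_norm_lt_mul_sqrt hn hη0 hc hη hy.1 hy.2.1
        (by rw [dist_eq_norm]; exact norm_sub_lt_of_mem_truncCone hy)
  have hdist := dist_nonneg (x := y) (y := x)
  have hr : 0 < r := by linarith
  have hrρ : r < ρ := hrM.trans_le (min_le_right _ _)
  have hyρ : y ∈ ball x ρ := mem_ball.2 (by linarith)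
  exact (lt_of_le_measure_ball_inter_of_measure_diff_cthickening_lt μH[(n : ℝ)] E hxP hνP hν.le
    (by positivity) (hLADR y ⟨hyρ, hyE⟩ s hs (by linarith))
    (hflat r hr (hrM.trans_le (min_le_left _ _))) hsr hδs).not_ge hle

/-- Existence of truncated cones (Lemma 4.1). -/
theorem stmt0 {n : ℕ} (E : Set (EuclideanSpace ℝ (Fin (n + 1))))
    (x : EuclideanSpace ℝ (Fin (n + 1))) (hx : x ∈ E)
    (c ρ : ℝ) (hc : 0 < c) (hρ : 0 < ρ)
    (hLADR : ∀ y ∈ ball x ρ ∩ E, ∀ r : ℝ, 0 < r → r ≤ ρ →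
      ENNReal.ofReal (c * r ^ n) ≤ μH[(n : ℝ)] (ball y r ∩ E))
    (η : ℝ) (hη0 : 0 < η) (hη : η < min (((2 : ℝ) ^ (4 * n))⁻¹) (c ^ 2))
    (P : AffineSubspace ℝ (EuclideanSpace ℝ (Fin (n + 1))))
    (hxP : x ∈ P) (hP : Module.finrank ℝ P.direction = n)
    (r₀ : ℝ) (hr₀ : 0 < r₀)
    (hflat : ∀ r : ℝ, 0 < r → r < r₀ →
      μH[(n : ℝ)] ((E ∩ ball x r) \ Metric.cthickening (η * r) (P : Set _))
        < ENNReal.ofReal (η * r ^ n))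
    (ν : EuclideanSpace ℝ (Fin (n + 1))) (hν : ‖ν‖ = 1)
    (hνP : ∀ v ∈ P.direction, ⟪v, ν⟫ = 0) :
    Disjoint
      (truncCone ν (η ^ ((1 : ℝ) / (4 * n)) * min r₀ ρ)
        (2 * Real.arctan (η ^ (-(1 : ℝ) / (4 * n)) / 2)) x) E :=
  stmt0_general E x c ρ hc hLADR η hη0 hη P hxP r₀ hflat ν hν hνP
end
end

section
/- Let E ⊂ ℝ^{n+1} (n ≥ 1) be a closed set with locally finite H^n-measure. Suppose there exist countably many bounded Lipschitz domains Ω_j ⊂ ℝ^{n+1} \ E and a set Z ⊂ E with H^n(Z) = 0 such that E ⊂ Z ∪ ⋃_j ∂Ω_j. If F ⊂ E is a Borel set with ω^X(F) = 0 for every X ∈ ℝ^{n+1} \ E (where ω^X is harmonic measure for ℝ^{n+1} \ E with pole X), then H^n(F) = 0. The proof uses that for a bounded Lipschitz domain Ω_j, harmonic measure and surface measure on ∂Ω_j are mutually absolutely continuous (Dahlberg's theorem), together with the maximum principle: ω^X(F) ≥ ω^X_{Ω_j}(F ∩ ∂Ω_j) for X ∈ Ω_j. -/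
open Metric MeasureTheory Set Filter
open scoped Topology

noncomputable section

/-- Theorem 1.1: if a closed set `E ⊆ ℝ^{n+1}` with locally finite `H^n` measure is
`H^n`-a.e. covered by boundaries of bounded Lipschitz subdomains of `ℝ^{n+1} \ E`,
then (granting Dahlberg's theorem and the maximum principle as hypotheses) any Borel
`F ⊆ E` which is null for harmonic measure with every pole is `H^n`-null. -/
theorem stmt6 {n : ℕ} (hn : 1 ≤ n)
    (E : Set (EuclideanSpace ℝ (Fin (n + 1)))) (hE : IsClosed E)
    (hloc : ∀ K : Set (EuclideanSpace ℝ (Fin (n + 1))), IsCompact K →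
      μH[(n : ℝ)] (E ∩ K) < ⊤)
    (Ω : ℕ → Set (EuclideanSpace ℝ (Fin (n + 1))))
    (hOpen : ∀ j, IsOpen (Ω j)) (hConn : ∀ j, IsConnected (Ω j))
    (hBdd : ∀ j, Bornology.IsBounded (Ω j)) (hsub : ∀ j, Ω j ⊆ Eᶜ)
    (Z : Set (EuclideanSpace ℝ (Fin (n + 1)))) (hZE : Z ⊆ E) (hZ : μH[(n : ℝ)] Z = 0)
    (hcover : E ⊆ Z ∪ ⋃ j, frontier (Ω j))
    -- harmonic measure for `ℝ^{n+1} \ E` with pole `X`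
    (ω : EuclideanSpace ℝ (Fin (n + 1)) → Measure (EuclideanSpace ℝ (Fin (n + 1))))
    -- harmonic measure for the Lipschitz subdomain `Ω j` with pole `X`
    (ωd : ℕ → EuclideanSpace ℝ (Fin (n + 1)) → Measure (EuclideanSpace ℝ (Fin (n + 1))))
    -- Dahlberg's theorem: mutual absolute continuity on `∂(Ω j)`
    (hDahlberg : ∀ j, ∀ X ∈ Ω j, ∀ F : Set (EuclideanSpace ℝ (Fin (n + 1))),
      MeasurableSet F → F ⊆ frontier (Ω j) → (μH[(n : ℝ)] F = 0 ↔ ωd j X F = 0))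
    -- the maximum principle
    (hmax : ∀ j, ∀ X ∈ Ω j, ∀ F : Set (EuclideanSpace ℝ (Fin (n + 1))),
      MeasurableSet F → F ⊆ E → ωd j X (F ∩ frontier (Ω j)) ≤ ω X F)
    (F : Set (EuclideanSpace ℝ (Fin (n + 1)))) (hF : MeasurableSet F) (hFE : F ⊆ E)
    (hω0 : ∀ X ∈ Eᶜ, ω X F = 0) :
    μH[(n : ℝ)] F = 0 := by
  have hFsub : F ⊆ (F ∩ Z) ∪ ⋃ j, F ∩ frontier (Ω j) := by
    intro x hx
    rcases hcover (hFE hx) with h | h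
    · exact Or.inl ⟨hx, h⟩
    · rcases mem_iUnion.1 h with ⟨j, hj⟩
      exact Or.inr (mem_iUnion.2 ⟨j, hx, hj⟩)
  have h1 : μH[(n : ℝ)] (F ∩ Z) = 0 :=
    measure_mono_null inter_subset_right hZ
  have h2 : ∀ j, μH[(n : ℝ)] (F ∩ frontier (Ω j)) = 0 := by
    intro j
    obtain ⟨X, hX⟩ := (hConn j).nonempty
    have hmeas : MeasurableSet (F ∩ frontier (Ω j)) :=
      hF.inter isClosed_frontier.measurableSet
    have := hmax j X hX F hF hFE
    rw [hω0 X (hsub j hX)] at this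
    have h0 : ωd j X (F ∩ frontier (Ω j)) = 0 := le_antisymm this bot_le
    exact (hDahlberg j X hX _ hmeas inter_subset_right).2 h0
  refine le_antisymm ?_ bot_le
  calc μH[(n : ℝ)] F ≤ μH[(n : ℝ)] ((F ∩ Z) ∪ ⋃ j, F ∩ frontier (Ω j)) :=
        measure_mono hFsub
    _ = 0 := by
        rw [measure_union_null h1]
        exact measure_iUnion_null h2
end
end

section
/- For α ∈ (0,∞) \ {1}, let Ω_α = {(x', x_{n+1}) ∈ ℝ^n × ℝ : x_{n+1} > |x'|^α} (n ≥ 2). If α > 1 then H^n(B(0,r) ∩ ∂Ω_α)/r^n → 0 as r → ∞, so the lower Ahlfors-David regularity condition fails at 0 at large scales. If α < 1 then H^n(B(0,r) ∩ ∂Ω_α)/r^n → 0 as r → 0^+, so the lower ADR condition at small scales fails at 0. -/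
open Metric MeasureTheory Set Filter
open scoped Topology

noncomputable section

/-- The boundary of `Ω_α`, i.e. the graph `{(x', |x'|^α)}` in `ℝ^n × ℝ`. -/
def graphAlpha (n : ℕ) (α : ℝ) : Set (EuclideanSpace ℝ (Fin n) × ℝ) :=
  {p | p.2 = ‖p.1‖ ^ α}

/-!
Over heights `t > 0`, `∂Ω_α` is the surface of revolution `‖x‖ = t ^ (1/α)`. Where a profile `g`
is 1-Lipschitz and `Λ ≤ g t₀`, the slab of the surface `‖x‖ = g t` with `t ∈ [t₀, t₀ + Λ]` is a
5-Lipschitz image of the annulus `g t₀ ≤ ‖y‖ ≤ g t₀ + Λ`, so its `H^n`-measure is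
`≲ (g t₀) ^ (n - 1) * Λ`; cutting a longer height interval into such slabs gives
`≲ (max g) ^ (n - 1) * length`. For `α > 1` the profile `t ^ (1/α)` is 1-Lipschitz on `[1, ∞)`,
and the remaining piece over the unit ball is a Lipschitz graph; for `α < 1` it is 1-Lipschitz
near `0`, and we sum over the dyadic heights `r / 2 ^ (j + 1) ≤ t ≤ r / 2 ^ j`. Either way
`H^n(B(0,r) ∩ ∂Ω_α) ≲ r ^ (1 + (n - 1)/α)` in the relevant range of `r`, and
`1 + (n - 1)/α - n = (n - 1)(1/α - 1)` is negative for `α > 1` and positive for `α < 1`.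
-/

open scoped ENNReal NNReal
open Module

namespace NormedSpace

theorem norm_normalize_le_one {V : Type*} [NormedAddCommGroup V] [NormedSpace ℝ V] (y : V) :
    ‖normalize y‖ ≤ 1 := by
  rcases eq_or_ne y 0 with rfl | hy
  · simp
  · exact (norm_normalize_eq_one_iff.mpr hy).le

theorem norm_normalize_sub_normalize_le {V : Type*} [NormedAddCommGroup V] [NormedSpace ℝ V]
    (y : V) {z : V} (hz : z ≠ 0) : ‖normalize y - normalize z‖ ≤ 2 * ‖y - z‖ / ‖z‖ := by
  have hz' : 0 < ‖z‖ := norm_pos_iff.mpr hz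
  have hy : ‖normalize y - ‖z‖⁻¹ • y‖ ≤ ‖y - z‖ / ‖z‖ := by
    rcases eq_or_ne y 0 with rfl | hy
    · simp only [normalize_zero_eq_zero, smul_zero, sub_zero, norm_zero]
      positivity
    have hy' : 0 < ‖y‖ := norm_pos_iff.mpr hy
    rw [normalize, ← sub_smul, norm_smul, Real.norm_eq_abs]
    calc |‖y‖⁻¹ - ‖z‖⁻¹| * ‖y‖ = |‖z‖ - ‖y‖| / ‖z‖ := by
          rw [inv_sub_inv hy'.ne' hz'.ne', abs_div, abs_mul, abs_of_pos hy', abs_of_pos hz']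
          field_simp
      _ ≤ ‖y - z‖ / ‖z‖ := by
          gcongr
          rw [abs_sub_comm]
          exact abs_norm_sub_norm_le y z
  have hyz : ‖‖z‖⁻¹ • (y - z)‖ = ‖y - z‖ / ‖z‖ := by
    rw [norm_smul, norm_inv, norm_norm, inv_mul_eq_div]
  calc ‖normalize y - normalize z‖ = ‖(normalize y - ‖z‖⁻¹ • y) + ‖z‖⁻¹ • (y - z)‖ := by
        rw [show normalize z = ‖z‖⁻¹ • z from rfl, smul_sub]; abel_nf
    _ ≤ ‖y - z‖ / ‖z‖ + ‖y - z‖ / ‖z‖ := norm_add_le_of_le hy hyz.le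
    _ = 2 * ‖y - z‖ / ‖z‖ := by ring

end NormedSpace

theorem lipschitzOnWith_rpow_Icc {a b β : ℝ} {K : ℝ≥0} (ha : 0 ≤ a) (hβ : 0 < a ∨ 1 ≤ β)
    (hK : ∀ t ∈ Icc a b, |β| * t ^ (β - 1) ≤ K) :
    LipschitzOnWith K (fun t : ℝ => t ^ β) (Icc a b) := by
  refine (convex_Icc a b).lipschitzOnWith_of_nnnorm_hasDerivWithin_le
    (f' := fun t => β * t ^ (β - 1)) (fun t ht => ?_) (fun t ht => ?_)
  · refine (Real.hasDerivAt_rpow_const ?_).hasDerivWithinAt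
    exact hβ.imp (fun h => (h.trans_le ht.1).ne') id
  · rw [← NNReal.coe_le_coe, coe_nnnorm, Real.norm_eq_abs, abs_mul,
      abs_of_nonneg (Real.rpow_nonneg (ha.trans ht.1) _)]
    exact hK t ht

theorem rpow_pow_pred_mul_self {r : ℝ} (hr : 0 < r) (β : ℝ) {n : ℕ} (hn : n ≠ 0) :
    (r ^ β) ^ (n - 1) * r = r ^ (1 + β * (n - 1)) := by
  rw [← Real.rpow_natCast, ← Real.rpow_mul hr.le, Nat.cast_sub (Nat.one_le_iff_ne_zero.mpr hn),
    Nat.cast_one, Real.rpow_add hr, Real.rpow_one, mul_comm]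

theorem snd_lt_of_mem_ball_zero {E : Type*} [SeminormedAddCommGroup E] {p : E × ℝ} {r : ℝ}
    (hp : p ∈ ball 0 r) : p.2 < r :=
  (le_abs_self _).trans_lt ((norm_snd_le p).trans_lt (mem_ball_zero_iff.mp hp))

theorem tendsto_div_ofReal_pow_of_le {l : Filter ℝ} {f : ℝ → ℝ≥0∞} {C : ℝ≥0∞} {γ : ℝ} {n : ℕ}
    (hC : C ≠ ⊤) (hpos : ∀ᶠ r in l, 0 < r) (hf : ∀ᶠ r in l, f r ≤ C * ENNReal.ofReal (r ^ γ))
    (hγ : Tendsto (fun r : ℝ => r ^ (γ - n)) l (𝓝 0)) :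
    Tendsto (fun r => f r / ENNReal.ofReal (r ^ n)) l (𝓝 0) := by
  have hlim : Tendsto (fun r : ℝ => C * ENNReal.ofReal (r ^ (γ - n))) l (𝓝 0) := by
    simpa using ENNReal.Tendsto.const_mul (ENNReal.tendsto_ofReal hγ) (Or.inr hC)
  refine tendsto_of_tendsto_of_tendsto_of_le_of_le' tendsto_const_nhds hlim
    (Eventually.of_forall fun _ => zero_le) ?_
  filter_upwards [hpos, hf] with r hr hfr
  calc f r / ENNReal.ofReal (r ^ n) ≤ C * ENNReal.ofReal (r ^ γ) / ENNReal.ofReal (r ^ n) :=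
        ENNReal.div_le_div_right hfr _
    _ = C * ENNReal.ofReal (r ^ (γ - n)) := by
        rw [mul_div_assoc, ← ENNReal.ofReal_div_of_pos (by positivity), Real.rpow_sub hr,
          Real.rpow_natCast]

theorem addHaar_closedBall_diff_ball_le {E : Type*} [NormedAddCommGroup E] [NormedSpace ℝ E]
    [FiniteDimensional ℝ E] [MeasurableSpace E] [BorelSpace E] [Nontrivial E]
    (μ : Measure E) [μ.IsAddHaarMeasure] {a b : ℝ} (ha : 0 ≤ a) (hab : a ≤ b) :
    μ (closedBall 0 b \ ball 0 a) ≤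
      ENNReal.ofReal (finrank ℝ E * b ^ (finrank ℝ E - 1) * (b - a)) * μ (ball 0 1) := by
  set d := finrank ℝ E
  have hb : 0 ≤ b := ha.trans hab
  have hpow : b ^ d ≤ d * b ^ (d - 1) * (b - a) + a ^ d := by
    have := abs_pow_sub_pow_le b a d
    rw [abs_of_nonneg (sub_nonneg.mpr hab), abs_of_nonneg hb, abs_of_nonneg ha,
      max_eq_left hab] at this
    linarith [le_abs_self (b ^ d - a ^ d)]
  rw [measure_sdiff (ball_subset_closedBall.trans (closedBall_subset_closedBall hab))
    measurableSet_ball.nullMeasurableSet measure_ball_lt_top.ne,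
    Measure.addHaar_closedBall μ _ hb, Measure.addHaar_ball μ _ ha,
    tsub_le_iff_right, ← add_mul,
    ← ENNReal.ofReal_add (mul_nonneg (by positivity) (sub_nonneg.mpr hab)) (by positivity)]
  gcongr

def surfaceOfRevolution (n : ℕ) (g : ℝ → ℝ) (I : Set ℝ) : Set (EuclideanSpace ℝ (Fin n) × ℝ) :=
  {p | p.2 ∈ I ∧ ‖p.1‖ = g p.2}

def revolutionChart {n : ℕ} (g : ℝ → ℝ) (t₀ a : ℝ) (y : EuclideanSpace ℝ (Fin n)) :
    EuclideanSpace ℝ (Fin n) × ℝ :=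
  (g (t₀ + (‖y‖ - a)) • NormedSpace.normalize y, t₀ + (‖y‖ - a))

/-- `5` is the Lipschitz constant of `revolutionChart` on the annulus, and `n * 2 ^ (n - 1)` comes
from `(a + Λ) ^ n - a ^ n ≤ n * (2 * a) ^ (n - 1) * Λ` for `Λ ≤ a`. -/
def revolutionConst (n : ℕ) : ℝ≥0∞ :=
  5 ^ n * ENNReal.ofReal (n * 2 ^ (n - 1)) * μH[n] (ball (0 : EuclideanSpace ℝ (Fin n)) 1)

theorem revolutionConst_ne_top (n : ℕ) : revolutionConst n ≠ ⊤ := by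
  unfold revolutionConst
  finiteness

section Revolution

variable {n : ℕ}

theorem surfaceOfRevolution_mono {g : ℝ → ℝ} {I J : Set ℝ} (h : I ⊆ J) :
    surfaceOfRevolution n g I ⊆ surfaceOfRevolution n g J :=
  fun _ hp => ⟨h hp.1, hp.2⟩

theorem surfaceOfRevolution_union (g : ℝ → ℝ) (I J : Set ℝ) :
    surfaceOfRevolution n g (I ∪ J) = surfaceOfRevolution n g I ∪ surfaceOfRevolution n g J := by
  ext p
  simp [surfaceOfRevolution, or_and_right]

theorem surfaceOfRevolution_subset_image_revolutionChart {g : ℝ → ℝ} {t₀ Λ a : ℝ} (ha : 0 < a)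
    (hg₀ : ∀ t ∈ Icc t₀ (t₀ + Λ), 0 < g t) :
    surfaceOfRevolution n g (Icc t₀ (t₀ + Λ)) ⊆
      revolutionChart g t₀ a '' (closedBall 0 (a + Λ) \ ball 0 a) := by
  rintro ⟨x, t⟩ ⟨ht, hx⟩
  have hnx : ‖NormedSpace.normalize x‖ = 1 :=
    NormedSpace.norm_normalize_eq_one_iff.mpr (norm_pos_iff.mp (hx ▸ hg₀ t ht))
  have hs : 0 < a + (t - t₀) := by linarith [ht.1]
  refine ⟨(a + (t - t₀)) • NormedSpace.normalize x, ?_, ?_⟩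
  · rw [Set.mem_sdiff, mem_closedBall_zero_iff, mem_ball_zero_iff, norm_smul, hnx, mul_one,
      Real.norm_of_nonneg hs.le]
    constructor <;> linarith [ht.1, ht.2]
  · simp only [revolutionChart, norm_smul, hnx, mul_one, Real.norm_of_nonneg hs.le,
      NormedSpace.normalize_smul_of_pos hs, NormedSpace.normalize_normalize]
    rw [show t₀ + (a + (t - t₀) - a) = t by ring, ← hx, NormedSpace.norm_smul_normalize]

theorem lipschitzOnWith_revolutionChart {g : ℝ → ℝ} {t₀ Λ : ℝ} (hΛg : Λ ≤ g t₀) (hg₀ : 0 < g t₀)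
    (hg : LipschitzOnWith 1 g (Icc t₀ (t₀ + Λ))) :
    LipschitzOnWith 5 (revolutionChart (n := n) g t₀ (g t₀))
      (closedBall 0 (g t₀ + Λ) \ ball 0 (g t₀)) := by
  set a := g t₀
  set τ : EuclideanSpace ℝ (Fin n) → ℝ := fun y => t₀ + (‖y‖ - a)
  have hτ : ∀ y ∈ closedBall 0 (a + Λ) \ ball 0 a, τ y ∈ Icc t₀ (t₀ + Λ) := by
    rintro y ⟨hy₁, hy₂⟩
    simp only [mem_closedBall_zero_iff, mem_ball_zero_iff, not_lt] at hy₁ hy₂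
    exact ⟨by linarith, by linarith⟩
  have hτL : LipschitzWith 1 τ := LipschitzWith.of_dist_le_mul fun y z => by
    simpa [τ, Real.dist_eq, dist_eq_norm] using abs_norm_sub_norm_le y z
  refine (LipschitzOnWith.prodMk (Kf := 5) ?_ hτL.lipschitzOnWith).weaken (by norm_num)
  refine LipschitzOnWith.of_dist_le_mul fun y hy z hz => ?_
  have hz₀ : a ≤ ‖z‖ := by simpa using hz.2
  have hgτ : |g (τ y) - g (τ z)| ≤ ‖y - z‖ := by
    have h₁ := hg.dist_le_mul _ (hτ y hy) _ (hτ z hz)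
    have h₂ := hτL.dist_le_mul y z
    rw [NNReal.coe_one, one_mul] at h₁ h₂
    rw [← Real.dist_eq, ← dist_eq_norm]
    exact h₁.trans h₂
  have hgz : |g (τ z)| ≤ 2 * a := by
    have h := hg.dist_le_mul _ (hτ z hz) t₀ ⟨le_rfl, by linarith [(hτ z hz).1, (hτ z hz).2]⟩
    rw [Real.dist_eq, Real.dist_eq, NNReal.coe_one, one_mul,
      abs_of_nonneg (sub_nonneg.mpr (hτ z hz).1)] at h
    have := abs_le.mp (h.trans (by linarith [(hτ z hz).2] : τ z - t₀ ≤ a))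
    exact abs_le.mpr ⟨by linarith, by linarith⟩
  have hnz := NormedSpace.norm_normalize_sub_normalize_le y (norm_pos_iff.mp (hg₀.trans_le hz₀))
  rw [dist_eq_norm, dist_eq_norm, NNReal.coe_ofNat]
  calc ‖g (τ y) • NormedSpace.normalize y - g (τ z) • NormedSpace.normalize z‖
      = ‖(g (τ y) - g (τ z)) • NormedSpace.normalize y +
          g (τ z) • (NormedSpace.normalize y - NormedSpace.normalize z)‖ := by
        rw [sub_smul, smul_sub]; abel_nf
    _ ≤ |g (τ y) - g (τ z)| * 1 + |g (τ z)| * (2 * ‖y - z‖ / ‖z‖) := by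
        refine norm_add_le_of_le ?_ ?_ <;> rw [norm_smul, Real.norm_eq_abs]
        · gcongr
          exact NormedSpace.norm_normalize_le_one y
        · gcongr
    _ ≤ ‖y - z‖ + 2 * a * (2 * ‖y - z‖ / a) := by
        gcongr
        linarith
    _ = 5 * ‖y - z‖ := by field_simp; ring

theorem hausdorffMeasure_surfaceOfRevolution_slab_le (hn : n ≠ 0) {g : ℝ → ℝ} {t₀ Λ : ℝ}
    (hΛ : 0 ≤ Λ) (hΛg : Λ ≤ g t₀) (hg : LipschitzOnWith 1 g (Icc t₀ (t₀ + Λ)))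
    (hg₀ : ∀ t ∈ Icc t₀ (t₀ + Λ), 0 < g t) :
    μH[n] (surfaceOfRevolution n g (Icc t₀ (t₀ + Λ))) ≤
      revolutionConst n * ENNReal.ofReal (g t₀ ^ (n - 1) * Λ) := by
  have : Nontrivial (EuclideanSpace ℝ (Fin n)) :=
    have : Nonempty (Fin n) := ⟨⟨0, Nat.pos_of_ne_zero hn⟩⟩
    inferInstance
  set a := g t₀
  have ha : 0 < a := hg₀ t₀ ⟨le_rfl, by linarith⟩
  have hA : μH[n] (closedBall (0 : EuclideanSpace ℝ (Fin n)) (a + Λ) \ ball 0 a) ≤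
      ENNReal.ofReal (n * 2 ^ (n - 1)) * ENNReal.ofReal (a ^ (n - 1) * Λ) *
        μH[n] (ball (0 : EuclideanSpace ℝ (Fin n)) 1) := by
    refine (addHaar_closedBall_diff_ball_le _ ha.le (by linarith)).trans ?_
    rw [finrank_euclideanSpace_fin, add_sub_cancel_left, ← ENNReal.ofReal_mul (by positivity)]
    gcongr ENNReal.ofReal ?_ * _
    calc (n : ℝ) * (a + Λ) ^ (n - 1) * Λ ≤ n * (2 * a) ^ (n - 1) * Λ := by gcongr; linarith
      _ = n * 2 ^ (n - 1) * (a ^ (n - 1) * Λ) := by ring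
  calc μH[n] (surfaceOfRevolution n g (Icc t₀ (t₀ + Λ)))
      ≤ μH[n] (revolutionChart g t₀ a '' (closedBall 0 (a + Λ) \ ball 0 a)) :=
        measure_mono (surfaceOfRevolution_subset_image_revolutionChart ha hg₀)
    _ ≤ 5 ^ n * μH[n] (closedBall (0 : EuclideanSpace ℝ (Fin n)) (a + Λ) \ ball 0 a) := by
        simpa using (lipschitzOnWith_revolutionChart hΛg ha hg).hausdorffMeasure_image_le
          (Nat.cast_nonneg n)
    _ ≤ 5 ^ n * (ENNReal.ofReal (n * 2 ^ (n - 1)) * ENNReal.ofReal (a ^ (n - 1) * Λ) *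
          μH[n] (ball (0 : EuclideanSpace ℝ (Fin n)) 1)) := by gcongr
    _ = revolutionConst n * ENNReal.ofReal (a ^ (n - 1) * Λ) := by rw [revolutionConst]; ring

theorem hausdorffMeasure_surfaceOfRevolution_le_of_sub_le (hn : n ≠ 0) {g : ℝ → ℝ}
    {a b m G : ℝ} (hm : 0 < m) (hg : LipschitzOnWith 1 g (Icc a b))
    (hgm : ∀ t ∈ Icc a b, m ≤ g t) (hgG : ∀ t ∈ Icc a b, g t ≤ G) (hba : b - a ≤ m) :
    μH[n] (surfaceOfRevolution n g (Icc a b)) ≤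
      revolutionConst n * ENNReal.ofReal (G ^ (n - 1) * (b - a)) := by
  rcases lt_or_ge b a with hba' | hab
  · simp [Icc_eq_empty_of_lt hba', surfaceOfRevolution]
  have haI : a ∈ Icc a b := ⟨le_rfl, hab⟩
  have h := hausdorffMeasure_surfaceOfRevolution_slab_le hn (t₀ := a) (sub_nonneg.mpr hab)
    (hba.trans (hgm a haI)) (by rwa [add_sub_cancel])
    (by rw [add_sub_cancel]; exact fun t ht => hm.trans_le (hgm t ht))
  rw [add_sub_cancel] at h
  refine h.trans ?_
  gcongr
  · exact (hm.trans_le (hgm a haI)).le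
  · exact hgG a haI

theorem hausdorffMeasure_surfaceOfRevolution_le (hn : n ≠ 0) {g : ℝ → ℝ}
    {a b m G : ℝ} (hm : 0 < m) (hg : LipschitzOnWith 1 g (Icc a b))
    (hgm : ∀ t ∈ Icc a b, m ≤ g t) (hgG : ∀ t ∈ Icc a b, g t ≤ G) :
    μH[n] (surfaceOfRevolution n g (Icc a b)) ≤
      revolutionConst n * ENNReal.ofReal (G ^ (n - 1) * (b - a)) := by
  obtain ⟨N, hN⟩ := exists_nat_ge ((b - a) / m)
  rw [div_le_iff₀ hm] at hN
  induction N generalizing a with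
  | zero =>
    exact hausdorffMeasure_surfaceOfRevolution_le_of_sub_le hn hm hg hgm hgG
      (by push_cast at hN; linarith)
  | succ k ih =>
    rcases le_or_gt (b - a) m with hba | hba
    · exact hausdorffMeasure_surfaceOfRevolution_le_of_sub_le hn hm hg hgm hgG hba
    have haI : a ∈ Icc a b := ⟨le_rfl, by linarith⟩
    have hG : 0 ≤ G := hm.le.trans ((hgm a haI).trans (hgG a haI))
    have hl : Icc a (a + m) ⊆ Icc a b := Icc_subset_Icc_right (by linarith)
    have hr : Icc (a + m) b ⊆ Icc a b := Icc_subset_Icc_left (by linarith)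
    calc μH[n] (surfaceOfRevolution n g (Icc a b))
        ≤ μH[n] (surfaceOfRevolution n g (Icc a (a + m)) ∪
            surfaceOfRevolution n g (Icc (a + m) b)) := by
          rw [← surfaceOfRevolution_union]
          exact measure_mono (surfaceOfRevolution_mono Icc_subset_Icc_union_Icc)
      _ ≤ revolutionConst n * ENNReal.ofReal (G ^ (n - 1) * (a + m - a)) +
            revolutionConst n * ENNReal.ofReal (G ^ (n - 1) * (b - (a + m))) := by
          refine (measure_union_le _ _).trans (add_le_add ?_ ?_)
          · exact hausdorffMeasure_surfaceOfRevolution_le_of_sub_le hn hm (hg.mono hl)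
              (fun t ht => hgm t (hl ht)) (fun t ht => hgG t (hl ht)) (by linarith)
          · exact ih (hg.mono hr) (fun t ht => hgm t (hr ht)) (fun t ht => hgG t (hr ht))
              (by push_cast at hN; linarith)
      _ = revolutionConst n * ENNReal.ofReal (G ^ (n - 1) * (b - a)) := by
          rw [← mul_add, ← ENNReal.ofReal_add (mul_nonneg (pow_nonneg hG _) (by linarith))
            (mul_nonneg (pow_nonneg hG _) (by linarith))]
          ring_nf

end Revolution

theorem norm_eq_rpow_inv_of_mem_graphAlpha {n : ℕ} {α : ℝ} (hα : α ≠ 0)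
    {p : EuclideanSpace ℝ (Fin n) × ℝ} (hp : p ∈ graphAlpha n α) : ‖p.1‖ = p.2 ^ α⁻¹ := by
  rw [show p.2 = ‖p.1‖ ^ α from hp, ← Real.rpow_mul (norm_nonneg _), mul_inv_cancel₀ hα,
    Real.rpow_one]

theorem hausdorffMeasure_graphAlpha_inter_norm_le_one_ne_top {n : ℕ} {α : ℝ} (hα : 1 ≤ α) :
    μH[n] (graphAlpha n α ∩ {p | ‖p.1‖ ≤ 1}) ≠ ⊤ := by
  have hf : LipschitzOnWith (Real.toNNReal α) (fun s : ℝ => s ^ α) (Icc 0 1) :=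
    lipschitzOnWith_rpow_Icc le_rfl (Or.inr hα) fun t ht => by
      rw [abs_of_pos (by linarith), Real.coe_toNNReal _ (by linarith)]
      exact mul_le_of_le_one_right (by linarith) (Real.rpow_le_one ht.1 ht.2 (by linarith))
  have hgraph : LipschitzOnWith (max 1 (Real.toNNReal α))
      (fun x : EuclideanSpace ℝ (Fin n) => (x, ‖x‖ ^ α)) (closedBall 0 1) := by
    refine LipschitzWith.id.lipschitzOnWith.prodMk ?_
    have h := hf.comp (lipschitzWith_one_norm (E := EuclideanSpace ℝ (Fin n))).lipschitzOnWith
      fun x hx => ⟨norm_nonneg x, mem_closedBall_zero_iff.mp hx⟩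
    rwa [mul_one] at h
  have hsub : graphAlpha n α ∩ {p | ‖p.1‖ ≤ 1} ⊆
      (fun x : EuclideanSpace ℝ (Fin n) => (x, ‖x‖ ^ α)) '' closedBall 0 1 := by
    rintro ⟨x, t⟩ ⟨hx, hx₁⟩
    exact ⟨x, mem_closedBall_zero_iff.mpr hx₁, by simp [show t = ‖x‖ ^ α from hx]⟩
  refine ne_top_of_le_ne_top ?_
    ((measure_mono hsub).trans (hgraph.hausdorffMeasure_image_le (Nat.cast_nonneg n)))
  exact ENNReal.mul_ne_top (by simp) measure_closedBall_lt_top.ne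

theorem ball_inter_graphAlpha_subset_union {n : ℕ} {α : ℝ} (hα : 0 < α) (r : ℝ) :
    ball 0 r ∩ graphAlpha n α ⊆
      (graphAlpha n α ∩ {p | ‖p.1‖ ≤ 1}) ∪ surfaceOfRevolution n (· ^ α⁻¹) (Icc 1 r) := by
  rintro ⟨x, t⟩ ⟨hball, hgraph⟩
  rcases le_or_gt ‖x‖ 1 with hx | hx
  · exact Or.inl ⟨hgraph, hx⟩
  refine Or.inr ⟨⟨?_, (snd_lt_of_mem_ball_zero hball).le⟩,
    norm_eq_rpow_inv_of_mem_graphAlpha hα.ne' hgraph⟩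
  rw [show t = ‖x‖ ^ α from hgraph]
  exact Real.one_le_rpow hx.le hα.le

theorem ball_inter_graphAlpha_subset_iUnion {n : ℕ} {α : ℝ} (hα : 0 < α) (r : ℝ) :
    ball 0 r ∩ graphAlpha n α ⊆
      {0} ∪ ⋃ j : ℕ, surfaceOfRevolution n (· ^ α⁻¹) (Icc (r / 2 ^ (j + 1)) (r / 2 ^ j)) := by
  rintro ⟨x, t⟩ ⟨hball, hgraph⟩
  have hx := norm_eq_rpow_inv_of_mem_graphAlpha hα.ne' hgraph
  have ht : t < r := snd_lt_of_mem_ball_zero hball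
  have ht₀ : 0 ≤ t := by rw [show t = ‖x‖ ^ α from hgraph]; positivity
  rcases ht₀.eq_or_lt with rfl | ht₀
  · left
    exact Prod.ext (norm_eq_zero.mp (hx.trans (Real.zero_rpow (inv_ne_zero hα.ne')))) rfl
  obtain ⟨j, hj, hj₁⟩ := exists_nat_pow_near (one_le_div ht₀ |>.mpr ht.le) one_lt_two
  rw [le_div_iff₀ ht₀] at hj
  rw [div_lt_iff₀ ht₀] at hj₁
  refine Or.inr (mem_iUnion.mpr ⟨j, ⟨?_, ?_⟩, hx⟩)
  · rw [div_le_iff₀ (by positivity)]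
    linarith
  · rw [le_div_iff₀ (by positivity)]
    linarith

theorem hausdorffMeasure_ball_inter_graphAlpha_le_of_one_lt {n : ℕ} (hn : n ≠ 0) {α : ℝ}
    (hα : 1 < α) : ∃ C : ℝ≥0∞, C ≠ ⊤ ∧ ∀ r ≥ 1,
      μH[n] (ball (0 : EuclideanSpace ℝ (Fin n) × ℝ) r ∩ graphAlpha n α) ≤
        C * ENNReal.ofReal (r ^ (1 + α⁻¹ * (n - 1))) := by
  set β := α⁻¹
  have hβ₀ : 0 < β := inv_pos.mpr (by linarith)
  have hβ₁ : β < 1 := inv_lt_one_of_one_lt₀ hα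
  set K := graphAlpha n α ∩ {p | ‖p.1‖ ≤ 1}
  refine ⟨μH[n] K + revolutionConst n,
    ENNReal.add_ne_top.mpr ⟨hausdorffMeasure_graphAlpha_inter_norm_le_one_ne_top hα.le,
      revolutionConst_ne_top n⟩, fun r hr => ?_⟩
  have hlip : LipschitzOnWith 1 (· ^ β) (Icc 1 r) :=
    lipschitzOnWith_rpow_Icc zero_le_one (Or.inl one_pos) fun t ht => by
      rw [abs_of_pos hβ₀, NNReal.coe_one]
      exact mul_le_one₀ hβ₁.le (Real.rpow_nonneg (by linarith [ht.1]) _)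
        (Real.rpow_le_one_of_one_le_of_nonpos ht.1 (by linarith))
  have hsurf := hausdorffMeasure_surfaceOfRevolution_le hn one_pos hlip
    (fun t ht => Real.one_le_rpow ht.1 hβ₀.le)
    (fun t ht => Real.rpow_le_rpow (by linarith [ht.1]) ht.2 hβ₀.le)
  have hr₀ : 0 < r := by linarith
  have hn₁ : (1 : ℝ) ≤ n := by exact_mod_cast Nat.one_le_iff_ne_zero.mpr hn
  calc μH[n] (ball 0 r ∩ graphAlpha n α)
      ≤ μH[n] K + μH[n] (surfaceOfRevolution n (· ^ β) (Icc 1 r)) :=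
        (measure_mono (ball_inter_graphAlpha_subset_union (by linarith) r)).trans
          (measure_union_le _ _)
    _ ≤ μH[n] K * ENNReal.ofReal (r ^ (1 + β * (n - 1))) +
          revolutionConst n * ENNReal.ofReal (r ^ (1 + β * (n - 1))) := by
        gcongr
        · exact le_mul_of_one_le_right' (ENNReal.one_le_ofReal.mpr
            (Real.one_le_rpow hr (by nlinarith)))
        · refine hsurf.trans ?_
          rw [← rpow_pow_pred_mul_self hr₀ β hn]
          gcongr
          linarith
    _ = (μH[n] K + revolutionConst n) * ENNReal.ofReal (r ^ (1 + β * (n - 1))) :=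
        (add_mul _ _ _).symm

theorem hausdorffMeasure_ball_inter_graphAlpha_le_of_lt_one {n : ℕ} (hn : n ≠ 0) {α : ℝ}
    (hα₀ : 0 < α) (hα : α < 1) : ∀ᶠ r in 𝓝[>] 0,
      μH[n] (ball (0 : EuclideanSpace ℝ (Fin n) × ℝ) r ∩ graphAlpha n α) ≤
        revolutionConst n * ENNReal.ofReal (r ^ (1 + α⁻¹ * (n - 1))) := by
  set β := α⁻¹
  have hβ : 1 < β := one_lt_inv₀ hα₀ |>.mpr hα
  have hsmall : ∀ᶠ r in 𝓝[>] (0 : ℝ), β * r ^ (β - 1) ≤ 1 := by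
    have h : Tendsto (fun r : ℝ => β * r ^ (β - 1)) (𝓝[>] 0) (𝓝 (β * 0)) :=
      ((tendsto_id.mono_left nhdsWithin_le_nhds).rpow_const_nhds_zero (sub_pos.mpr hβ)).const_mul β
    rw [mul_zero] at h
    exact h.eventually (eventually_le_nhds one_pos)
  filter_upwards [self_mem_nhdsWithin, hsmall] with r (hr : 0 < r) hrβ
  have hlip : LipschitzOnWith 1 (· ^ β) (Icc 0 r) :=
    lipschitzOnWith_rpow_Icc le_rfl (Or.inr hβ.le) fun t ht => by
      rw [abs_of_pos (by linarith), NNReal.coe_one]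
      exact (mul_le_mul_of_nonneg_left (Real.rpow_le_rpow ht.1 ht.2 (by linarith))
        (by linarith)).trans hrβ
  set S : ℕ → Set (EuclideanSpace ℝ (Fin n) × ℝ) :=
    fun j => surfaceOfRevolution n (· ^ β) (Icc (r / 2 ^ (j + 1)) (r / 2 ^ j))
  have hS : ∀ j, μH[n] (S j) ≤
      revolutionConst n * ENNReal.ofReal (r ^ (1 + β * (n - 1)) / 2 / 2 ^ j) := by
    intro j
    have hrj : r / 2 ^ j ≤ r := div_le_self hr.le (one_le_pow₀ one_le_two)
    have hsub : Icc (r / 2 ^ (j + 1)) (r / 2 ^ j) ⊆ Icc 0 r :=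
      Icc_subset_Icc (by positivity) hrj
    refine (hausdorffMeasure_surfaceOfRevolution_le hn (by positivity) (hlip.mono hsub)
      (fun t ht => Real.rpow_le_rpow (by positivity) ht.1 (by linarith))
      (fun t ht => Real.rpow_le_rpow (hsub ht).1 ht.2 (by linarith))).trans ?_
    rw [show r / 2 ^ j - r / 2 ^ (j + 1) = r / 2 / 2 ^ j by rw [pow_succ]; field_simp; ring,
      ← rpow_pow_pred_mul_self hr β hn, mul_div_assoc, mul_div_assoc]
    gcongr
  have : NullSingletonClass (μH[n] : Measure (EuclideanSpace ℝ (Fin n) × ℝ)) :=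
    Measure.nullSingletonClass_hausdorff _ (by exact_mod_cast Nat.pos_of_ne_zero hn)
  calc μH[n] (ball 0 r ∩ graphAlpha n α) ≤ μH[n] {0} + μH[n] (⋃ j, S j) :=
        (measure_mono (ball_inter_graphAlpha_subset_iUnion hα₀ r)).trans (measure_union_le _ _)
    _ ≤ ∑' j, μH[n] (S j) := by rw [measure_singleton, zero_add]; exact measure_iUnion_le _
    _ ≤ ∑' j, revolutionConst n * ENNReal.ofReal (r ^ (1 + β * (n - 1)) / 2 / 2 ^ j) :=
        ENNReal.tsum_le_tsum hS
    _ = revolutionConst n * ENNReal.ofReal (r ^ (1 + β * (n - 1))) := by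
        rw [ENNReal.tsum_mul_left, ← ENNReal.ofReal_tsum_of_nonneg (fun j => by positivity)
          (summable_geometric_two' _), tsum_geometric_two']

theorem stmt10_general {n : ℕ} (hn : 2 ≤ n) (α : ℝ) (hα : 0 < α) :
    (1 < α →
      Tendsto
        (fun r : ℝ =>
          μH[(n : ℝ)] (ball (0 : EuclideanSpace ℝ (Fin n) × ℝ) r ∩ graphAlpha n α) /
            ENNReal.ofReal (r ^ n))
        atTop (nhds 0)) ∧
    (α < 1 →
      Tendsto
        (fun r : ℝ =>
          μH[(n : ℝ)] (ball (0 : EuclideanSpace ℝ (Fin n) × ℝ) r ∩ graphAlpha n α) /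
            ENNReal.ofReal (r ^ n))
        (nhdsWithin 0 (Set.Ioi 0)) (nhds 0)) := by
  have hn₀ : n ≠ 0 := by omega
  have hn₁ : (1 : ℝ) < n := by exact_mod_cast hn
  refine ⟨fun hα₁ => ?_, fun hα₁ => ?_⟩
  · obtain ⟨C, hC, hle⟩ := hausdorffMeasure_ball_inter_graphAlpha_le_of_one_lt hn₀ hα₁
    refine tendsto_div_ofReal_pow_of_le hC (eventually_gt_atTop 0)
      ((eventually_ge_atTop 1).mono hle) ?_
    rw [show 1 + α⁻¹ * (n - 1) - n = -((1 - α⁻¹) * (n - 1)) by ring]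
    exact tendsto_rpow_neg_atTop (mul_pos (sub_pos.mpr (inv_lt_one_of_one_lt₀ hα₁)) (by linarith))
  · refine tendsto_div_ofReal_pow_of_le (revolutionConst_ne_top n) self_mem_nhdsWithin
      (hausdorffMeasure_ball_inter_graphAlpha_le_of_lt_one hn₀ hα hα₁) ?_
    refine (tendsto_id.mono_left nhdsWithin_le_nhds).rpow_const_nhds_zero ?_
    rw [show 1 + α⁻¹ * (n - 1) - n = (α⁻¹ - 1) * (n - 1) by ring]
    exact mul_pos (sub_pos.mpr ((one_lt_inv₀ hα).mpr hα₁)) (by linarith)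

/-- Failure of the lower ADR condition at `0` for the graph domains `Ω_α`:
at large scales when `α > 1`, and at small scales when `α < 1`. -/
theorem stmt10 {n : ℕ} (hn : 2 ≤ n) (α : ℝ) (hα : 0 < α) (hα1 : α ≠ 1) :
    (1 < α →
      Tendsto
        (fun r : ℝ =>
          μH[(n : ℝ)] (ball (0 : EuclideanSpace ℝ (Fin n) × ℝ) r ∩ graphAlpha n α) /
            ENNReal.ofReal (r ^ n))
        atTop (nhds 0)) ∧
    (α < 1 →
      Tendsto
        (fun r : ℝ =>
          μH[(n : ℝ)] (ball (0 : EuclideanSpace ℝ (Fin n) × ℝ) r ∩ graphAlpha n α) /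
            ENNReal.ofReal (r ^ n))
        (nhdsWithin 0 (Set.Ioi 0)) (nhds 0)) :=
  stmt10_general hn α hα
end
end

section
/- Let Ω ⊂ ℝ^{n+1} be connected and open, and suppose ∂Ω can be written as Z ∪ ⋃_j ∂Ω_j^{int} where H^n(Z) = 0 and each Ω_j^{int} ⊂ Ω is a bounded Lipschitz domain. Assume Dahlberg's theorem (for bounded Lipschitz domains, harmonic measure and surface measure are mutually absolutely continuous) and the maximum-principle inequality ω^X_Ω(F) ≥ ω^X_{Ω_j^{int}}(F ∩ ∂Ω_j^{int}) for X ∈ Ω_j^{int} and Borel F ⊂ ∂Ω. Then H^n⌞∂Ω is absolutely continuous with respect to harmonic measure ω^X of Ω for any fixed pole X ∈ Ω. -/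
open Metric MeasureTheory Set Filter
open scoped Topology

noncomputable section

/-!
If `F ⊆ ∂Ω` had positive `H^n` measure but vanishing harmonic measure, then, `Z` being
`H^n`-null and the cover countable, some `F ∩ ∂Ω_j` would have positive `H^n` measure.
Dahlberg's theorem makes its harmonic measure for `Ω_j` positive from a pole `Y ∈ Ω_j`, the
maximum principle transfers this to `ω^Y_Ω(F) > 0`, and Harnack moves the pole back to `X`.
-/

theorem exists_measure_inter_ne_zero_of_subset_union_iUnion {α ι : Type*} [MeasurableSpace α]
    [Countable ι] {μ : Measure α} {F Z : Set α} {S : ι → Set α} (hZ : μ Z = 0)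
    (hF : F ⊆ Z ∪ ⋃ i, S i) (hμF : μ F ≠ 0) : ∃ i, μ (F ∩ S i) ≠ 0 := by
  by_contra! h
  have hcover : F ⊆ Z ∪ ⋃ i, F ∩ S i := by
    intro x hx
    rcases hF hx with hxZ | hxS
    · exact Or.inl hxZ
    · obtain ⟨i, hi⟩ := mem_iUnion.1 hxS
      exact Or.inr (mem_iUnion.2 ⟨i, hx, hi⟩)
  exact hμF (measure_mono_null hcover (measure_union_null hZ (measure_iUnion_null h)))

theorem Set.Nonempty.of_measure_inter_frontier_ne_zero {α : Type*} [TopologicalSpace α]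
    [MeasurableSpace α] {μ : Measure α} {F U : Set α} (h : μ (F ∩ frontier U) ≠ 0) :
    U.Nonempty := by
  by_contra hU
  rw [not_nonempty_iff_eq_empty] at hU
  simp [hU] at h

theorem stmt18_general {n : ℕ}
    (Ω : Set (EuclideanSpace ℝ (Fin (n + 1))))
    (O : ℕ → Set (EuclideanSpace ℝ (Fin (n + 1))))
    (hsub : ∀ j, O j ⊆ Ω)
    (Z : Set (EuclideanSpace ℝ (Fin (n + 1)))) (hZ : μH[(n : ℝ)] Z = 0)
    (hcover : frontier Ω ⊆ Z ∪ ⋃ j, frontier (O j))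
    -- harmonic measure for `Ω` with pole `X`
    (ω : EuclideanSpace ℝ (Fin (n + 1)) → Measure (EuclideanSpace ℝ (Fin (n + 1))))
    -- harmonic measure for the Lipschitz subdomain `O j` with pole `X`
    (ωd : ℕ → EuclideanSpace ℝ (Fin (n + 1)) → Measure (EuclideanSpace ℝ (Fin (n + 1))))
    -- Dahlberg's theorem: mutual absolute continuity on `∂(O j)`
    (hDahlberg : ∀ j, ∀ X ∈ O j, ∀ F : Set (EuclideanSpace ℝ (Fin (n + 1))),
      MeasurableSet F → F ⊆ frontier (O j) → (μH[(n : ℝ)] F = 0 ↔ ωd j X F = 0))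
    -- the maximum principle
    (hmax : ∀ j, ∀ X ∈ O j, ∀ F : Set (EuclideanSpace ℝ (Fin (n + 1))),
      MeasurableSet F → F ⊆ frontier Ω → ωd j X (F ∩ frontier (O j)) ≤ ω X F)
    -- Harnack: harmonic measures with different poles are mutually absolutely continuous
    (hHarnack : ∀ X ∈ Ω, ∀ Y ∈ Ω, ∀ F : Set (EuclideanSpace ℝ (Fin (n + 1))),
      MeasurableSet F → F ⊆ frontier Ω → (ω X F = 0 ↔ ω Y F = 0)) :
    ∀ X ∈ Ω, ∀ F : Set (EuclideanSpace ℝ (Fin (n + 1))),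
      MeasurableSet F → F ⊆ frontier Ω → ω X F = 0 → μH[(n : ℝ)] F = 0 := by
  intro X hX F hF hFΩ hωX
  by_contra hHF
  obtain ⟨j, hj⟩ :=
    exists_measure_inter_ne_zero_of_subset_union_iUnion hZ (hFΩ.trans hcover) hHF
  obtain ⟨Y, hY⟩ := Set.Nonempty.of_measure_inter_frontier_ne_zero hj
  have hωY : ω Y F = 0 := (hHarnack X hX Y (hsub j hY) F hF hFΩ).1 hωX
  have hωdY : ωd j Y (F ∩ frontier (O j)) = 0 :=
    nonpos_iff_eq_zero.1 (hωY ▸ hmax j Y hY F hF hFΩ)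
  exact hj ((hDahlberg j Y hY _ (hF.inter isClosed_frontier.measurableSet)
    inter_subset_right).2 hωdY)

/-- If `∂Ω` is `H^n`-a.e. covered by boundaries of bounded Lipschitz subdomains of the
connected open set `Ω`, then (granting Dahlberg's theorem, the maximum principle, and
Harnack as hypotheses) `H^n ⌞ ∂Ω` is absolutely continuous with respect to harmonic
measure with any pole `X ∈ Ω`. -/
theorem stmt18 {n : ℕ}
    (Ω : Set (EuclideanSpace ℝ (Fin (n + 1)))) (hΩo : IsOpen Ω) (hΩc : IsConnected Ω)
    (O : ℕ → Set (EuclideanSpace ℝ (Fin (n + 1))))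
    (hOpen : ∀ j, IsOpen (O j)) (hConn : ∀ j, IsConnected (O j))
    (hBdd : ∀ j, Bornology.IsBounded (O j)) (hsub : ∀ j, O j ⊆ Ω)
    (Z : Set (EuclideanSpace ℝ (Fin (n + 1)))) (hZ : μH[(n : ℝ)] Z = 0)
    (hcover : frontier Ω ⊆ Z ∪ ⋃ j, frontier (O j))
    -- harmonic measure for `Ω` with pole `X`
    (ω : EuclideanSpace ℝ (Fin (n + 1)) → Measure (EuclideanSpace ℝ (Fin (n + 1))))
    -- harmonic measure for the Lipschitz subdomain `O j` with pole `X`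
    (ωd : ℕ → EuclideanSpace ℝ (Fin (n + 1)) → Measure (EuclideanSpace ℝ (Fin (n + 1))))
    -- Dahlberg's theorem: mutual absolute continuity on `∂(O j)`
    (hDahlberg : ∀ j, ∀ X ∈ O j, ∀ F : Set (EuclideanSpace ℝ (Fin (n + 1))),
      MeasurableSet F → F ⊆ frontier (O j) → (μH[(n : ℝ)] F = 0 ↔ ωd j X F = 0))
    -- the maximum principle
    (hmax : ∀ j, ∀ X ∈ O j, ∀ F : Set (EuclideanSpace ℝ (Fin (n + 1))),
      MeasurableSet F → F ⊆ frontier Ω → ωd j X (F ∩ frontier (O j)) ≤ ω X F)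
    -- Harnack: harmonic measures with different poles are mutually absolutely continuous
    (hHarnack : ∀ X ∈ Ω, ∀ Y ∈ Ω, ∀ F : Set (EuclideanSpace ℝ (Fin (n + 1))),
      MeasurableSet F → F ⊆ frontier Ω → (ω X F = 0 ↔ ω Y F = 0)) :
    ∀ X ∈ Ω, ∀ F : Set (EuclideanSpace ℝ (Fin (n + 1))),
      MeasurableSet F → F ⊆ frontier Ω → ω X F = 0 → μH[(n : ℝ)] F = 0 :=
  stmt18_general Ω O hsub Z hZ hcover ω ωd hDahlberg hmax hHarnack
end
end
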